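/- arXiv:1007.3015 — 2 statements merged into one kernel-verified Lean document; each statement's English description precedes it below -/
import Mathlib

section
/- With q_{ij} = a^h_i a^h_j + 2 a^x_i a^y_j + 2 a^x_j a^y_i and c_{klm} the 3×3 determinant with rows (a^h_k, a^x_k, a^y_k), (a^h_l, a^x_l, a^y_l), (a^h_m, a^x_m, a^y_m), the identity c_{ijk} c_{lmn} + (1/4) det [[q_{il}, q_{im}, q_{in}], [q_{jl}, q_{jm}, q_{jn}], [q_{kl}, q_{km}, q_{kn}]] = 0 holds in the polynomial ring ℂ[a^h_i, a^x_i, a^y_i : i ≥ 0]. -/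
/-!
The matrix `(q_{ij})` with rows `i, j, k` and columns `l, m, n` factors as `A G Bᵀ`, where `A` and `B`
are the matrices of the vectors `a_i, a_j, a_k` and `a_l, a_m, a_n`, and `G` is the Gram matrix of
the quadratic form `h² + 4xy`. Taking determinants, `det (q) = c_{ijk} · det G · c_{lmn}` with
`det G = -4`.
-/


open MvPolynomial
open MvPolynomial

/-- The indeterminate `a^ξ_i`, where `ξ ∈ {h,x,y}` is encoded as `0 = h`, `1 = x`,
`2 = y`, in the polynomial ring `ℂ[a^h_i, a^x_i, a^y_i : i ≥ 0]`. -/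
noncomputable def aVar (ξ : Fin 3) (i : ℕ) : MvPolynomial (ℕ × Fin 3) ℂ :=
  X (i, ξ)

/-- The quadratic invariant `q_{ij} = a^h_i a^h_j + 2 a^x_i a^y_j + 2 a^x_j a^y_i`. -/
noncomputable def qInv (i j : ℕ) : MvPolynomial (ℕ × Fin 3) ℂ :=
  aVar 0 i * aVar 0 j + 2 * aVar 1 i * aVar 2 j + 2 * aVar 1 j * aVar 2 i

/-- The cubic invariant `c_{klm}`, the determinant with rows
`(a^h_k, a^x_k, a^y_k)`, `(a^h_l, a^x_l, a^y_l)`, `(a^h_m, a^x_m, a^y_m)`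
(defined for arbitrary index triples; it is antisymmetric). -/
noncomputable def cInv (k l m : ℕ) : MvPolynomial (ℕ × Fin 3) ℂ :=
  Matrix.det !![aVar 0 k, aVar 1 k, aVar 2 k;
                aVar 0 l, aVar 1 l, aVar 2 l;
                aVar 0 m, aVar 1 m, aVar 2 m]

namespace Weyl

open scoped Matrix

-- `qInv i j` is the polarisation `aᵢᵀ G aⱼ` of the quadratic form `h² + 4xy` with this Gram matrix `G`.
def gram : Matrix (Fin 3) (Fin 3) ℂ := !![1, 0, 0; 0, 0, 2; 0, 2, 0]

lemma det_gram : gram.det = -4 := by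
  simp [gram, Matrix.det_fin_three]
  norm_num

noncomputable def rowMatrix (i j k : ℕ) : Matrix (Fin 3) (Fin 3) (MvPolynomial (ℕ × Fin 3) ℂ) :=
  Matrix.of fun r ξ => aVar ξ (![i, j, k] r)

lemma cInv_eq_det_rowMatrix (i j k : ℕ) : cInv i j k = (rowMatrix i j k).det := by
  rw [cInv]
  congr 1
  ext r ξ
  fin_cases r <;> fin_cases ξ <;> rfl

lemma qInv_matrix_eq (i j k l m n : ℕ) :
    !![qInv i l, qInv i m, qInv i n;
       qInv j l, qInv j m, qInv j n;
       qInv k l, qInv k m, qInv k n]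
      = rowMatrix i j k * gram.map C * (rowMatrix l m n)ᵀ := by
  ext r s : 1
  fin_cases r <;> fin_cases s <;>
    simp [rowMatrix, gram, qInv, Matrix.mul_apply, Fin.sum_univ_three, map_ofNat] <;> ring

theorem det_qInv_matrix (i j k l m n : ℕ) :
    Matrix.det !![qInv i l, qInv i m, qInv i n;
                  qInv j l, qInv j m, qInv j n;
                  qInv k l, qInv k m, qInv k n] = C (-4) * (cInv i j k * cInv l m n) := by
  rw [qInv_matrix_eq, Matrix.det_mul, Matrix.det_mul, Matrix.det_transpose,
    ← RingHom.mapMatrix_apply, ← RingHom.map_det, det_gram, cInv_eq_det_rowMatrix, cInv_eq_det_rowMatrix]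
  ring

end Weyl

/-- The second type of relation in Weyl's theorem:
`c_{ijk} c_{lmn} + (1/4) det [[q_{il}, q_{im}, q_{in}], [q_{jl}, q_{jm}, q_{jn}],
[q_{kl}, q_{km}, q_{kn}]] = 0`. -/
theorem stmt_3 (i j k l m n : ℕ) :
    cInv i j k * cInv l m n
      + C (1/4 : ℂ) * Matrix.det !![qInv i l, qInv i m, qInv i n;
                                    qInv j l, qInv j m, qInv j n;
                                    qInv k l, qInv k m, qInv k n] = 0 := by
  rw [Weyl.det_qInv_matrix, ← mul_assoc, ← C_mul]
  norm_num
end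

section
/- Let D be the derivation of R_∞ = ℂ[x_j^{(i)} : 1 ≤ j ≤ n, i ≥ 0] with D(x_j^{(i)}) = x_j^{(i+1)}, and let the Lie algebra g[t] act on R_∞ by the jet action (ξ t^r)(x_j^{(i)}) = (i!/(i−r)!) (ξ·x_j)^{(i−r)}. Then for every g-invariant polynomial f ∈ ℂ[x_1^{(0)},...,x_n^{(0)}] (i.e., ξ(f) = 0 for all ξ ∈ g), all derivatives D^k(f), k ≥ 0, are invariant under g[t]: (ξ t^r)(D^k f) = 0 for all ξ ∈ g and r ≥ 0. -/
/-!
On generators one checks `⁅ξ tʳ, D⁆ = r • ξ t^(r-1)`, which amounts to the Pascal-type identity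
`(i+1)↓(s+1) = i↓(s+1) + (s+1)·i↓s` for descending factorials. Since `ξ tʳ` with `r ≥ 1` kills the
weight-zero variables and `ξ t⁰` kills `f` by invariance, induction on `k` through this commutator
shows that every `ξ tʳ` kills `Dᵏ f`.
-/

open MvPolynomial

attribute [local instance 100] LieRing.ofAssociativeRing

/-- The jet action: given a Lie algebra `g` acting on the coordinate space `V*`
(with dual basis identified with `Fin n → ℂ`) via `α`, the derivation of the ring
`ℂ[x_j^{(i)} : 1 ≤ j ≤ n, i ≥ 0]` of functions on the infinite jet space of `V`
attached to `ξ t^r ∈ g[t]`; on generators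
`(ξ t^r)(x_j^{(i)}) = (i!/(i−r)!) (ξ·x_j)^{(i−r)}` for `r ≤ i`, and `0` for `r > i`. -/
noncomputable def jetDer {g : Type*} [LieRing g] [LieAlgebra ℂ g] (n : ℕ)
    (α : g →ₗ⁅ℂ⁆ Module.End ℂ (Fin n → ℂ)) (ξ : g) (r : ℕ) :
    Derivation ℂ (MvPolynomial (Fin n × ℕ) ℂ) (MvPolynomial (Fin n × ℕ) ℂ) :=
  MvPolynomial.mkDerivation ℂ fun v =>
    (v.2.descFactorial r : ℂ) •
      ∑ k : Fin n, C (α ξ (Pi.single v.1 1) k) * X (k, v.2 - r)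

/-- The derivation `D` of `R_∞ = ℂ[x_j^{(i)}]` with `D(x_j^{(i)}) = x_j^{(i+1)}`. -/
noncomputable def jetD (n : ℕ) :
    Derivation ℂ (MvPolynomial (Fin n × ℕ) ℂ) (MvPolynomial (Fin n × ℕ) ℂ) :=
  MvPolynomial.mkDerivation ℂ fun v => X (v.1, v.2 + 1)

theorem Nat.succ_descFactorial_succ_eq_add (i s : ℕ) :
    (i + 1).descFactorial (s + 1) = i.descFactorial (s + 1) + (s + 1) * i.descFactorial s := by
  rw [Nat.succ_descFactorial_succ, Nat.descFactorial_succ, ← add_mul]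
  rcases le_or_gt s i with h | h
  · congr 1
    omega
  · simp [Nat.descFactorial_eq_zero_iff_lt.mpr h]

theorem Derivation.apply_iterate_eq_zero_of_lie_eq_smul {R A : Type*} [CommRing R] [CommRing A]
    [Algebra R A] (δ : ℕ → Derivation R A A) (D : Derivation R A A) (c : ℕ → R)
    (hδD : ∀ r, ⁅δ r, D⁆ = c r • δ (r - 1)) {p : A} (hp : ∀ r, δ r p = 0) (k r : ℕ) :
    δ r (D^[k] p) = 0 := by
  induction k generalizing r with
  | zero => exact hp r
  | succ k ih =>
    have hcomm := congrArg (· (D^[k] p)) (hδD r)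
    simp only [Derivation.commutator_apply, Derivation.smul_apply, ih, map_zero, sub_zero,
      smul_zero] at hcomm
    rwa [Function.iterate_succ_apply']

section Jet

variable {g : Type*} [LieRing g] [LieAlgebra ℂ g] {n : ℕ} (α : g →ₗ⁅ℂ⁆ Module.End ℂ (Fin n → ℂ))

/-- The jet coordinate `(ξ · x_j)^{(m)}`. -/
noncomputable def jetAction (ξ : g) (j : Fin n) (m : ℕ) : MvPolynomial (Fin n × ℕ) ℂ :=
  ∑ k : Fin n, C (α ξ (Pi.single j 1) k) * X (k, m)

theorem jetDer_X (ξ : g) (r : ℕ) (v : Fin n × ℕ) :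
    jetDer n α ξ r (X v) = (v.2.descFactorial r : ℂ) • jetAction α ξ v.1 (v.2 - r) :=
  mkDerivation_X ℂ _ v

theorem jetD_X (v : Fin n × ℕ) : jetD n (X v) = X (v.1, v.2 + 1) :=
  mkDerivation_X ℂ _ v

theorem jetD_jetAction (ξ : g) (j : Fin n) (m : ℕ) :
    jetD n (jetAction α ξ j m) = jetAction α ξ j (m + 1) := by
  simp only [jetAction, map_sum, Derivation.leibniz, derivation_C, jetD_X, smul_eq_mul, mul_zero,
    add_zero]

theorem jetDer_succ_rename_zero (ξ : g) (s : ℕ) (f : MvPolynomial (Fin n) ℂ) :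
    jetDer n α ξ (s + 1) (rename (fun j => (j, 0)) f) = 0 := by
  refine derivation_eq_zero_of_forall_mem_vars fun v hv => ?_
  obtain ⟨j, -, rfl⟩ := mem_vars_rename _ f hv
  simp [jetDer_X]

theorem jetDer_lie_jetD (ξ : g) (r : ℕ) :
    ⁅jetDer n α ξ r, jetD n⁆ = (r : ℂ) • jetDer n α ξ (r - 1) := by
  refine derivation_ext fun ⟨j, i⟩ => ?_
  rw [Derivation.commutator_apply, Derivation.smul_apply, jetD_X, jetDer_X, jetDer_X, jetDer_X,
    Derivation.map_smul, jetD_jetAction]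
  cases r with
  | zero => simp
  | succ s =>
    -- `i.descFactorial (s + 1)` vanishes unless `s < i`, where the two indices agree
    have hindex : (i.descFactorial (s + 1) : ℂ) • jetAction α ξ j (i - (s + 1) + 1) =
        (i.descFactorial (s + 1) : ℂ) • jetAction α ξ j (i - s) := by
      rcases le_or_gt (s + 1) i with h | h
      · congr 2
        omega
      · rw [Nat.descFactorial_eq_zero_iff_lt.mpr h, Nat.cast_zero, zero_smul, zero_smul]
    simp only [hindex, Nat.add_sub_add_right, Nat.add_sub_cancel,
      Nat.succ_descFactorial_succ_eq_add, Nat.cast_add, Nat.cast_mul, Nat.cast_one, add_smul,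
      add_sub_cancel_left, mul_smul]

end Jet

/-- If `f` is a `g`-invariant polynomial in the weight-zero variables
`x_1^{(0)},…,x_n^{(0)}`, then all its derivatives `D^k(f)` are invariant under the
jet action of `g[t]`: `(ξ t^r)(D^k f) = 0` for all `ξ ∈ g`, `r ≥ 0`, `k ≥ 0`. -/
theorem stmt_8 {g : Type*} [LieRing g] [LieAlgebra ℂ g] (n : ℕ)
    (α : g →ₗ⁅ℂ⁆ Module.End ℂ (Fin n → ℂ)) (f : MvPolynomial (Fin n) ℂ)
    (hf : ∀ ξ : g, jetDer n α ξ 0 (rename (fun j => (j, 0)) f) = 0) :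
    ∀ (k : ℕ) (ξ : g) (r : ℕ),
      jetDer n α ξ r ((⇑(jetD n))^[k] (rename (fun j => (j, 0)) f)) = 0 := by
  intro k ξ r
  refine Derivation.apply_iterate_eq_zero_of_lie_eq_smul (jetDer n α ξ) (jetD n) (fun r => r)
    (jetDer_lie_jetD α ξ) (fun r => ?_) k r
  cases r with
  | zero => exact hf ξ
  | succ s => exact jetDer_succ_rename_zero α ξ s f
end
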